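/- arXiv:2511.03015 — 4 statements merged into one kernel-verified Lean document; each statement's English description precedes it below -/
import Mathlib

section
/- Let c ≥ 1, let z, y ∈ ℝ^c, let α > 0, and fix a class l ∈ {1,…,c}. Then the normalized product of the categorical prior probability and the isotropic Gaussian likelihood equals a softmax of updated logits: softmax(z)_l · exp(−(α/2)‖y − e_l‖²) / ( Σ_{l'=1}^c softmax(z)_{l'} · exp(−(α/2)‖y − e_{l'}‖²) ) = softmax(z + α·y)_l. (This is Theorem 1 of the paper: after observing y ~ N(x, α^{-1} I) with prior Cat(softmax(z)) on the one-hot vectors, the posterior is Cat(softmax(z + α·y)).) -/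
open Real Finset

/-- `softmax w l = exp (w l) / ∑ l', exp (w l')`. -/
noncomputable def softmax {c : ℕ} (w : Fin c → ℝ) : Fin c → ℝ :=
  fun l => Real.exp (w l) / ∑ l', Real.exp (w l')

/-- One-hot vector of class `l`. -/
def oneHot {c : ℕ} (l : Fin c) : Fin c → ℝ :=
  fun j => if j = l then 1 else 0

lemma sq_expand {c : ℕ} (y : Fin c → ℝ) (l : Fin c) :
    ∑ j, (y j - oneHot l j) ^ 2 = (∑ j, (y j)^2) + 1 - 2 * y l := by
  have : ∀ j, (y j - oneHot l j) ^ 2 =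
      (y j)^2 + (if j = l then (1:ℝ) - 2 * y j else 0) := by
    intro j
    unfold oneHot
    by_cases h : j = l <;> simp [h] <;> ring
  rw [Finset.sum_congr rfl (fun j _ => this j), Finset.sum_add_distrib,
    Finset.sum_ite_eq' Finset.univ l (fun j => (1:ℝ) - 2 * y j)]
  simp
  ring

/-- **Theorem 1 (Bayesian update for categorical beliefs).**
Given a prior belief `Cat(softmax z)` and a Gaussian likelihood
`y ~ N(x, α⁻¹ I)` on the one-hot vectors, the normalized product of prior and
likelihood is `Cat(softmax (z + α • y))`. -/
theorem categorical_bayes_update (c : ℕ) (hc : 1 ≤ c) (z y : Fin c → ℝ) (α : ℝ)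
    (hα : 0 < α) (l : Fin c) :
    softmax z l * Real.exp (-(α / 2) * ∑ j, (y j - oneHot l j) ^ 2) /
      (∑ l', softmax z l' * Real.exp (-(α / 2) * ∑ j, (y j - oneHot l' j) ^ 2)) =
    softmax (z + α • y) l := by
  set S := ∑ l', Real.exp (z l')
  have hS : 0 < S := Finset.sum_pos (fun i _ => Real.exp_pos _)
    (Finset.univ_nonempty_iff.mpr ⟨⟨0, hc⟩⟩)
  set C := Real.exp (-(α / 2) * ((∑ j, (y j)^2) + 1))
  have key : ∀ m : Fin c, softmax z m * Real.exp (-(α / 2) * ∑ j, (y j - oneHot m j) ^ 2)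
      = Real.exp (z m + α * y m) * C / S := by
    intro m
    unfold softmax
    rw [sq_expand]
    rw [div_mul_eq_mul_div, ← Real.exp_add, ← Real.exp_add]
    congr 2
    ring
  rw [key l, Finset.sum_congr rfl (fun m _ => key m), ← Finset.sum_div,
    ← Finset.sum_mul]
  have hC : C ≠ 0 := Real.exp_ne_zero _
  have hsum : 0 < ∑ m, Real.exp (z m + α * y m) := Finset.sum_pos
    (fun i _ => Real.exp_pos _) (Finset.univ_nonempty_iff.mpr ⟨⟨0, hc⟩⟩)
  have step : rexp (z l + α * y l) * C / S / ((∑ i, rexp (z i + α * y i)) * C / S)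
      = rexp (z l + α * y l) / ∑ i, rexp (z i + α * y i) := by
    have hsne := hsum.ne'
    field_simp
  rw [step]
  unfold softmax
  simp [Pi.add_apply, Pi.smul_apply, smul_eq_mul]
end

section
/- Let c ≥ 1, z₀ ∈ ℝ^c, k ≥ 1, and let α_1,…,α_k > 0 and y_1,…,y_k ∈ ℝ^c. Then for every class l ∈ {1,…,c}: softmax(z₀)_l · Π_{i=1}^k exp(−(α_i/2)‖y_i − e_l‖²) / ( Σ_{l'=1}^c softmax(z₀)_{l'} · Π_{i=1}^k exp(−(α_i/2)‖y_i − e_{l'}‖²) ) = softmax(z₀ + Σ_{i=1}^k α_i·y_i)_l. (Iterating the Bayesian update of Theorem 1, the belief after k noisy measurements has logits z_k = z₀ + Σ_i α_i y_i.) -/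
open Real Finset

/-- **Iterated Bayesian update.** Starting from the prior `Cat(softmax z₀)`
and observing `k` noisy measurements `yᵢ ~ N(x, αᵢ⁻¹ I)`, the posterior belief
is `Cat(softmax (z₀ + ∑ i, αᵢ • yᵢ))`. -/
theorem categorical_bayes_update_iterated (c : ℕ) (hc : 1 ≤ c) (z₀ : Fin c → ℝ)
    (k : ℕ) (hk : 1 ≤ k) (α : Fin k → ℝ) (hα : ∀ i, 0 < α i)
    (y : Fin k → Fin c → ℝ) (l : Fin c) :
    softmax z₀ l * (∏ i, Real.exp (-(α i / 2) * ∑ j, (y i j - oneHot l j) ^ 2)) /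
      (∑ l', softmax z₀ l' * ∏ i, Real.exp (-(α i / 2) * ∑ j, (y i j - oneHot l' j) ^ 2)) =
    softmax (z₀ + ∑ i, α i • y i) l := by
  haveI : NeZero c := ⟨by omega⟩
  set S : ℝ := ∑ l', Real.exp (z₀ l') with hS
  set C : ℝ := ∏ i, Real.exp (-(α i / 2) * (∑ j, (y i j) ^ 2 + 1)) with hC
  have hSpos : 0 < S := Finset.sum_pos (fun i _ => Real.exp_pos _) ⟨l, Finset.mem_univ l⟩
  have hCpos : 0 < C := Finset.prod_pos (fun i _ => Real.exp_pos _)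
  have key : ∀ l' : Fin c,
      softmax z₀ l' * ∏ i, Real.exp (-(α i / 2) * ∑ j, (y i j - oneHot l' j) ^ 2)
        = C / S * Real.exp ((z₀ + ∑ i, α i • y i) l') := by
    intro l'
    have hsum : ∀ i, (∑ j, (y i j - oneHot l' j) ^ 2)
        = (∑ j, (y i j) ^ 2 + 1) - 2 * y i l' := by
      intro i
      have h1 : ∀ j, (y i j - oneHot l' j) ^ 2
          = (y i j) ^ 2 - 2 * y i j * oneHot l' j + (oneHot l' j) ^ 2 := by
        intro j; ring
      simp only [h1, Finset.sum_add_distrib, Finset.sum_sub_distrib]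
      have h2 : (∑ j, 2 * y i j * oneHot l' j) = 2 * y i l' := by
        simp [oneHot, mul_ite, Finset.sum_ite_eq']
      have h3 : (∑ j, (oneHot l' j) ^ 2) = 1 := by
        simp [oneHot, apply_ite (fun t : ℝ => t ^ 2), Finset.sum_ite_eq']
      rw [h2, h3]; ring
    have hprod : (∏ i, Real.exp (-(α i / 2) * ∑ j, (y i j - oneHot l' j) ^ 2))
        = C * Real.exp (∑ i, α i * y i l') := by
      rw [hC]
      simp only [← Real.exp_sum, ← Real.exp_add, ← Finset.sum_add_distrib]
      congr 1
      apply Finset.sum_congr rfl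
      intro i _
      rw [hsum i]; ring
    rw [hprod]
    have happ : (z₀ + ∑ i, α i • y i) l' = z₀ l' + ∑ i, α i * y i l' := by
      simp [Finset.sum_apply]
    rw [happ, Real.exp_add, softmax, ← hS]
    ring
  rw [key l]
  have hsum2 : (∑ l', softmax z₀ l' * ∏ i, Real.exp (-(α i / 2) * ∑ j, (y i j - oneHot l' j) ^ 2))
      = C / S * ∑ l', Real.exp ((z₀ + ∑ i, α i • y i) l') := by
    rw [Finset.mul_sum]
    exact Finset.sum_congr rfl fun l' _ => key l'
  rw [hsum2, softmax]
  have hEpos : 0 < ∑ l', Real.exp ((z₀ + ∑ i, α i • y i) l') :=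
    Finset.sum_pos (fun i _ => Real.exp_pos _) ⟨l, Finset.mem_univ l⟩
  field_simp
end

section
/- Let n ≥ 1, let p : ℝ^n → ℝ be twice continuously differentiable with p(w) > 0 for all w, let f : ℝ^n → ℝ^n be continuously differentiable, and let β', γ ∈ ℝ. Then for every z ∈ ℝ^n: − div( w ↦ (β'·f(w) + ((γ−1)/2)·β'·∇(log ∘ p)(w)) · p(w) )(z) + (γ·β'/2)·Δp(z) = − div( w ↦ β'·f(w)·p(w) )(z) + (β'/2)·Δp(z), where ∇ denotes the gradient, div(F)(z) = Σ_{j=1}^n ∂F_j/∂w_j (z) denotes the divergence, and Δp(z) = Σ_{j=1}^n ∂²p/∂w_j² (z) denotes the Laplacian. (This is the Fokker–Planck identity underlying Theorem 4 of the paper: the generalized SDE family with noise parameter γ has the same Fokker–Planck right-hand side as the original BSI SDE, hence identical marginal densities.) -/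
open Finset

/-- The gradient of `g : ℝⁿ → ℝ`: `grad g z j = ∂g/∂wⱼ (z)`. -/
noncomputable def grad {n : ℕ} (g : (Fin n → ℝ) → ℝ) (z : Fin n → ℝ) : Fin n → ℝ :=
  fun j => fderiv ℝ g z (Pi.single j 1)

/-- The divergence of a vector field `F : ℝⁿ → ℝⁿ`: `div F z = ∑ⱼ ∂Fⱼ/∂wⱼ (z)`. -/
noncomputable def diverg {n : ℕ} (F : (Fin n → ℝ) → (Fin n → ℝ)) (z : Fin n → ℝ) : ℝ :=
  ∑ j, fderiv ℝ (fun w => F w j) z (Pi.single j 1)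

/-- The Laplacian of `g : ℝⁿ → ℝ`: `Δg z = ∑ⱼ ∂²g/∂wⱼ² (z)`. -/
noncomputable def laplacian {n : ℕ} (g : (Fin n → ℝ) → ℝ) (z : Fin n → ℝ) : ℝ :=
  ∑ j, fderiv ℝ (fun w => fderiv ℝ g w (Pi.single j 1)) z (Pi.single j 1)

/-!
The score-correction drift `c ∇(log p)` transports `p` with flux `c ∇(log p) p = c ∇p`, whose
divergence is `c Δp`. With `c = (γ - 1) β' / 2` this exactly compensates the change of the
diffusion coefficient from `β' / 2` to `γ β' / 2`.
-/

section

variable {n : ℕ}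

theorem laplacian_eq_diverg_grad (g : (Fin n → ℝ) → ℝ) : laplacian g = diverg (grad g) := rfl

theorem diverg_add {F G : (Fin n → ℝ) → Fin n → ℝ} {z : Fin n → ℝ}
    (hF : ∀ j, DifferentiableAt ℝ (fun w => F w j) z)
    (hG : ∀ j, DifferentiableAt ℝ (fun w => G w j) z) :
    diverg (fun w j => F w j + G w j) z = diverg F z + diverg G z := by
  simp only [diverg, fderiv_fun_add (hF _) (hG _), add_apply, sum_add_distrib]

theorem diverg_const_mul (c : ℝ) (F : (Fin n → ℝ) → Fin n → ℝ) (z : Fin n → ℝ) :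
    diverg (fun w j => c * F w j) z = c * diverg F z := by
  refine (sum_congr rfl fun j _ => ?_).trans (mul_sum _ _ _).symm
  rw [show (fun w => c * F w j) = c • fun w => F w j from rfl, fderiv_const_smul_field]
  rfl

theorem grad_log_comp_mul_self {g : (Fin n → ℝ) → ℝ} {w : Fin n → ℝ}
    (hg : DifferentiableAt ℝ g w) (hgw : g w ≠ 0) (j : Fin n) :
    grad (Real.log ∘ g) w j * g w = grad g w j := by
  have hlog : fderiv ℝ (Real.log ∘ g) w = (g w)⁻¹ • fderiv ℝ g w :=
    (hg.hasFDerivAt.log hgw).fderiv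
  simp only [grad, hlog, smul_apply, smul_eq_mul]
  field_simp

theorem ContDiff.differentiable_grad {g : (Fin n → ℝ) → ℝ} (hg : ContDiff ℝ 2 g) (j : Fin n) :
    Differentiable ℝ (fun w => grad g w j) :=
  ((hg.fderiv_right (m := 1) le_rfl).differentiable one_ne_zero).clm_apply (differentiable_const _)

end

theorem fokker_planck_family_general (n : ℕ) (p : (Fin n → ℝ) → ℝ)
    (hp : ContDiff ℝ 2 p) (hppos : ∀ w, 0 < p w)
    (f : (Fin n → ℝ) → (Fin n → ℝ)) (hf : ContDiff ℝ 1 f)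
    (β' γ : ℝ) (z : Fin n → ℝ) :
    -diverg (fun w j =>
        (β' * f w j + (γ - 1) / 2 * β' * grad (Real.log ∘ p) w j) * p w) z
      + γ * β' / 2 * laplacian p z =
    -diverg (fun w j => β' * f w j * p w) z + β' / 2 * laplacian p z := by
  have hpd : Differentiable ℝ p := hp.differentiable (by norm_num)
  have hflux : (fun w j => (β' * f w j + (γ - 1) / 2 * β' * grad (Real.log ∘ p) w j) * p w) =
      fun w j => β' * f w j * p w + (γ - 1) / 2 * β' * grad p w j := by
    funext w j
    rw [add_mul, mul_assoc _ (grad _ w j), grad_log_comp_mul_self (hpd w) (hppos w).ne']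
  have hdrift : ∀ j, DifferentiableAt ℝ (fun w => β' * f w j * p w) z := fun j =>
    (((differentiable_pi.mp (hf.differentiable (by norm_num))) j).const_mul β' z).mul (hpd z)
  have hscore : ∀ j, DifferentiableAt ℝ (fun w => (γ - 1) / 2 * β' * grad p w j) z := fun j =>
    (hp.differentiable_grad j z).const_mul _
  rw [hflux, diverg_add hdrift hscore, diverg_const_mul, ← laplacian_eq_diverg_grad]
  ring

/-- **Fokker–Planck identity behind Theorem 4 of the paper.** For a positive
`C²` density `p`, a `C¹` drift `f` and any `β', γ`, the Fokker–Planck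
right-hand side of the generalized SDE (with score-correction drift and
diffusion `γβ'`) equals that of the original BSI SDE. -/
theorem fokker_planck_family (n : ℕ) (hn : 1 ≤ n) (p : (Fin n → ℝ) → ℝ)
    (hp : ContDiff ℝ 2 p) (hppos : ∀ w, 0 < p w)
    (f : (Fin n → ℝ) → (Fin n → ℝ)) (hf : ContDiff ℝ 1 f)
    (β' γ : ℝ) (z : Fin n → ℝ) :
    -diverg (fun w j =>
        (β' * f w j + (γ - 1) / 2 * β' * grad (Real.log ∘ p) w j) * p w) z
      + γ * β' / 2 * laplacian p z =
    -diverg (fun w j => β' * f w j * p w) z + β' / 2 * laplacian p z :=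
  fokker_planck_family_general n p hp hppos f hf β' γ z
end

section
/- Let β' > 0, β ∈ ℝ, β₀ ∈ ℝ with β + β₀ > 0, Δt > 0, and z, μ₀, x̂ ∈ ℝ. For γ > 1 define κ(γ) = (γ − 1)·β'/(2(β₀ + β)) and m(γ) = μ₀ + (β + β'/κ(γ))·x̂. Then as γ → ∞: (i) the Ornstein–Uhlenbeck update mean converges, lim_{γ→∞} [ m(γ) + (z − m(γ))·exp(−κ(γ)·Δt) ] = μ₀ + β·x̂, and (ii) the Ornstein–Uhlenbeck update variance converges, lim_{γ→∞} (γ·β'/(2κ(γ)))·(1 − exp(−2κ(γ)·Δt)) = β₀ + β. (This is the infinite-noise limit of the Ornstein–Uhlenbeck sampler from Appendix B.3 of the paper: for γ → ∞ the update becomes independent of the previous state z, replacing all previous information with a fresh draw from N(μ₀ + β·x̂, (β₀ + β)·I).) -/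
open Filter Topology Real

/-- **Infinite-noise limit of the Ornstein–Uhlenbeck sampler (Appendix B.3).**
With `κ(γ) = (γ−1)β'/(2(β₀+β))` and `m(γ) = μ₀ + (β + β'/κ(γ))·x̂`, as
`γ → ∞` the OU update mean tends to `μ₀ + β·x̂` (independently of `z`) and its
variance tends to `β₀ + β`. -/
theorem ou_infinite_noise_limit (β' β β₀ Δt z μ₀ xhat : ℝ)
    (hβ' : 0 < β') (hββ₀ : 0 < β + β₀) (hΔt : 0 < Δt)
    (κ m : ℝ → ℝ)
    (hκ : κ = fun γ => (γ - 1) * β' / (2 * (β₀ + β)))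
    (hm : m = fun γ => μ₀ + (β + β' / κ γ) * xhat) :
    Tendsto (fun γ : ℝ => m γ + (z - m γ) * Real.exp (-(κ γ * Δt)))
        atTop (nhds (μ₀ + β * xhat)) ∧
      Tendsto (fun γ : ℝ => γ * β' / (2 * κ γ) * (1 - Real.exp (-(2 * κ γ * Δt))))
        atTop (nhds (β₀ + β)) := by
  have hD : 0 < 2 * (β₀ + β) := by linarith
  have hc : 0 < β' / (2 * (β₀ + β)) := div_pos hβ' hD
  have hsub : Tendsto (fun γ : ℝ => γ - 1) atTop atTop :=
    tendsto_atTop_add_const_right atTop (-1) tendsto_id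
  have hkinf : Tendsto κ atTop atTop := by
    rw [hκ]
    have := hsub.atTop_mul_const hc
    simpa [mul_div_assoc] using this
  have hexp : Tendsto (fun γ : ℝ => Real.exp (-(κ γ * Δt))) atTop (nhds 0) :=
    Real.tendsto_exp_atBot.comp
      (tendsto_neg_atTop_atBot.comp (hkinf.atTop_mul_const hΔt))
  have hexp2 : Tendsto (fun γ : ℝ => Real.exp (-(2 * κ γ * Δt))) atTop (nhds 0) := by
    have hk2 : Tendsto (fun γ : ℝ => 2 * κ γ) atTop atTop :=
      hkinf.const_mul_atTop (by norm_num)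
    exact Real.tendsto_exp_atBot.comp
      (tendsto_neg_atTop_atBot.comp (hk2.atTop_mul_const hΔt))
  have hinv : Tendsto (fun γ : ℝ => β' / κ γ) atTop (nhds 0) :=
    Tendsto.div_atTop tendsto_const_nhds hkinf
  have hminf : Tendsto m atTop (nhds (μ₀ + β * xhat)) := by
    rw [hm]
    have h : Tendsto (fun γ : ℝ => μ₀ + (β + β' / κ γ) * xhat) atTop
        (nhds (μ₀ + (β + 0) * xhat)) :=
      tendsto_const_nhds.add ((tendsto_const_nhds.add hinv).mul_const xhat)
    simpa using h
  constructor
  · have h : Tendsto (fun γ : ℝ => m γ + (z - m γ) * Real.exp (-(κ γ * Δt))) atTop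
        (nhds ((μ₀ + β * xhat) + (z - (μ₀ + β * xhat)) * 0)) :=
      hminf.add ((tendsto_const_nhds.sub hminf).mul hexp)
    simpa using h
  · have h2 : Tendsto (fun γ : ℝ => γ * β' / (2 * κ γ)) atTop (nhds (β₀ + β)) := by
      have hbase : Tendsto (fun γ : ℝ => (1 + (γ - 1)⁻¹) * (β₀ + β)) atTop
          (nhds (β₀ + β)) := by
        have h : Tendsto (fun γ : ℝ => (1 + (γ - 1)⁻¹) * (β₀ + β)) atTop
            (nhds ((1 + 0) * (β₀ + β))) :=
          (tendsto_const_nhds.add (tendsto_inv_atTop_zero.comp hsub)).mul_const (β₀ + β)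
        simpa using h
      refine hbase.congr' ?_
      filter_upwards [eventually_gt_atTop (1 : ℝ)] with γ hγ
      have hγ1 : γ - 1 ≠ 0 := by linarith
      rw [hκ]
      field_simp
      ring
    have h : Tendsto (fun γ : ℝ => γ * β' / (2 * κ γ) * (1 - Real.exp (-(2 * κ γ * Δt))))
        atTop (nhds ((β₀ + β) * (1 - 0))) :=
      h2.mul (tendsto_const_nhds.sub hexp2)
    simpa using h
end
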